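/- Under the assumptions of the main theorem with μτ_λ<∞ for all λ∈ℝ, let τ(α) denote the optimal solution of minimizing ν∫_0^τ ξ(s)ds subject to τ∈[0,T] μ-a.s. and μτ=α. Then the value function f(α) = ν∫_0^{τ(α)}ξ(s)ds is convex on [0,μT]∩[0,∞). -/

import Mathlib

/-!
Write `v = 1 - u`. The combination `τ = v τ(a) + u τ(b)` is admissible for the constraint
`μτ = v a + u b`, so optimality gives `f(v a + u b) ≤ J(τ)`, where `J` is the objective. Since
`ξ(x, ·)` is nondecreasing, `t ↦ ∫_0^t ξ(x, s) ds` is convex for every `x`, so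
`J(τ) ≤ v J(τ(a)) + u J(τ(b))` after integrating against `ν`. To integrate, the inequality is
kept in the form `P(τ) + v N(τ(a)) + u N(τ(b)) ≤ v P(τ(a)) + u P(τ(b)) + N(τ)` between the
`ℝ≥0∞`-valued integrals `P`, `N` of `ξ⁺` and `ξ⁻`, where only the `N`s are known to be finite.
-/

open Set MeasureTheory Filter Topology
open scoped ENNReal

/-- The (possibly infinite) value `ν ∫_0^{τ(x)} ξ(x,s) ds`, as an extended real. -/
noncomputable def clearingObjective {X : Type*} [MeasurableSpace X] (ν : Measure X)
    (ξ : X → ℝ → ℝ) (τ : X → ℝ≥0∞) : EReal :=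
  ((∫⁻ x, (∫⁻ s in {s : ℝ | 0 ≤ s ∧ ENNReal.ofReal s < τ x},
      ENNReal.ofReal (ξ x s)) ∂ν : ℝ≥0∞) : EReal) -
  ((∫⁻ x, (∫⁻ s in {s : ℝ | 0 ≤ s ∧ ENNReal.ofReal s < τ x},
      ENNReal.ofReal (-(ξ x s))) ∂ν : ℝ≥0∞) : EReal)

theorem MonotoneOn.convexOn_intervalIntegral {g : ℝ → ℝ} {a : ℝ} (hg : MonotoneOn g (Ici a)) :
    ConvexOn ℝ (Ici a) fun t => ∫ s in a..t, g s := by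
  have hint : ∀ {x y}, x ∈ Ici a → y ∈ Ici a → IntervalIntegrable g volume x y :=
    fun hx hy => (hg.mono (ordConnected_Ici.uIcc_subset hx hy)).intervalIntegrable
  refine convexOn_of_slope_mono_adjacent (convex_Ici a) fun {x y z} hx hz hxy hyz => ?_
  have hy : y ∈ Ici a := le_trans hx hxy.le
  rw [intervalIntegral.integral_interval_sub_left (hint self_mem_Ici hy) (hint self_mem_Ici hx),
    intervalIntegral.integral_interval_sub_left (hint self_mem_Ici hz) (hint self_mem_Ici hy)]
  have hleft : ∫ s in x..y, g s ≤ (y - x) * g y := by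
    simpa [mul_comm] using intervalIntegral.integral_mono_on hxy.le (hint hx hy)
      intervalIntegrable_const fun s hs => hg (le_trans hx hs.1) hy hs.2
  have hright : (z - y) * g y ≤ ∫ s in y..z, g s := by
    simpa [mul_comm] using intervalIntegral.integral_mono_on hyz.le intervalIntegrable_const
      (hint hy hz) fun s hs => hg hy (le_trans hy hs.1) hs.1
  calc (∫ s in x..y, g s) / (y - x) ≤ g y := by rwa [div_le_iff₀ (sub_pos.2 hxy), mul_comm]
    _ ≤ (∫ s in y..z, g s) / (z - y) := by rwa [le_div_iff₀ (sub_pos.2 hyz), mul_comm]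

theorem MonotoneOn.integrableOn_Ico {g : ℝ → ℝ} (hg : MonotoneOn g (Ici 0)) (r : ℝ) :
    IntegrableOn g (Ico 0 r) :=
  (MonotoneOn.integrableOn_isCompact isCompact_Icc (hg.mono fun _ hs => hs.1)).mono_set
    Ico_subset_Icc_self

theorem tendsto_ceil_mul_div_nhdsGE (t : ℝ) :
    Tendsto (fun n : ℕ => (⌈(n + 1 : ℝ) * t⌉ : ℝ) / (n + 1)) atTop (𝓝[≥] t) := by
  have hpos : ∀ n : ℕ, (0 : ℝ) < n + 1 := fun n => n.cast_add_one_pos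
  have hlow : ∀ n : ℕ, t ≤ (⌈(n + 1 : ℝ) * t⌉ : ℝ) / (n + 1) := fun n => by
    rw [le_div_iff₀ (hpos n), mul_comm]; exact Int.le_ceil _
  have hup : ∀ n : ℕ, (⌈(n + 1 : ℝ) * t⌉ : ℝ) / (n + 1) ≤ t + 1 / (n + 1) := fun n => by
    rw [div_le_iff₀ (hpos n), show (t + 1 / (n + 1)) * (n + 1) = (n + 1) * t + 1 by field_simp]
    exact (Int.ceil_lt_add_one _).le
  refine tendsto_nhdsWithin_iff.2 ⟨?_, Eventually.of_forall hlow⟩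
  refine tendsto_of_tendsto_of_tendsto_of_le_of_le tendsto_const_nhds ?_ hlow hup
  simpa using tendsto_one_div_add_atTop_nhds_zero_nat.const_add t

theorem measurable_uncurry_of_continuousWithinAt_Ici {X : Type*} [MeasurableSpace X]
    {f : X → ℝ → ℝ} (hmeas : ∀ t, Measurable (f · t))
    (hrc : ∀ x t, ContinuousWithinAt (f x) (Ici t) t) : Measurable (Function.uncurry f) := by
  refine measurable_of_tendsto_metrizable
    (f := fun (n : ℕ) (p : X × ℝ) => f p.1 ((⌈(n + 1 : ℝ) * p.2⌉ : ℝ) / (n + 1))) (fun n => ?_)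
    (tendsto_pi_nhds.2 fun ⟨x, t⟩ => (hrc x t).tendsto.comp (tendsto_ceil_mul_div_nhdsGE t))
  have : Measurable fun q : X × ℤ => f q.1 ((q.2 : ℝ) / (n + 1)) :=
    measurable_from_prod_countable_left fun k => hmeas ((k : ℝ) / (n + 1))
  exact this.comp <| measurable_fst.prodMk <|
    Int.measurable_ceil.comp (measurable_const.mul measurable_snd)

namespace EReal

theorem coe_ennreal_sub_le_coe_ennreal_sub_iff {A A' B B' : ℝ≥0∞} (hB : B ≠ ⊤) (hB' : B' ≠ ⊤) :
    (A : EReal) - B ≤ (A' : EReal) - B' ↔ A + B' ≤ A' + B := by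
  have hreal : ∀ {C : ℝ≥0∞}, C ≠ ⊤ → (C : EReal) ≠ ⊥ ∧ (C : EReal) ≠ ⊤ := fun hC =>
    ⟨coe_ennreal_ne_bot _, by simpa using hC⟩
  rw [sub_le_iff_le_add (.inl (hreal hB).1) (.inl (hreal hB).2), sub_eq_add_neg, add_right_comm,
    ← sub_eq_add_neg, le_sub_iff_add_le (.inl (hreal hB').1) (.inl (hreal hB').2),
    ← coe_ennreal_add, ← coe_ennreal_add, coe_ennreal_le_coe_ennreal_iff]

theorem coe_mul_coe_ennreal {c : ℝ} (hc : 0 ≤ c) (A : ℝ≥0∞) :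
    (c : EReal) * A = ((ENNReal.ofReal c * A : ℝ≥0∞) : EReal) := by
  rw [coe_ennreal_mul, coe_ennreal_ofReal, max_eq_left hc]

theorem coe_mul_sub_add_coe_mul_sub {p q : ℝ} (hp : 0 ≤ p) (hq : 0 ≤ q) (A A' B B' : ℝ≥0∞) :
    (p : EReal) * ((A : EReal) - B) + (q : EReal) * ((A' : EReal) - B') =
      ((ENNReal.ofReal p * A + ENNReal.ofReal q * A' : ℝ≥0∞) : EReal) -
        ((ENNReal.ofReal p * B + ENNReal.ofReal q * B' : ℝ≥0∞) : EReal) := by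
  rw [mul_sub_of_nonneg_of_ne_top (EReal.coe_nonneg.2 hp) (coe_ne_top p),
    mul_sub_of_nonneg_of_ne_top (EReal.coe_nonneg.2 hq) (coe_ne_top q),
    coe_mul_coe_ennreal hp, coe_mul_coe_ennreal hp, coe_mul_coe_ennreal hq,
    coe_mul_coe_ennreal hq, ← add_sub_add_comm (.inl (coe_ennreal_ne_bot _))
      (.inr (coe_ennreal_ne_bot _)), coe_ennreal_add, coe_ennreal_add]

end EReal

theorem coe_intervalIntegral_eq_lintegral_sub {g : ℝ → ℝ} {r : ℝ} (hr : 0 ≤ r)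
    (hg : IntegrableOn g (Ico 0 r)) :
    ((∫ s in 0..r, g s : ℝ) : EReal) =
      ((∫⁻ s in Ico 0 r, ENNReal.ofReal (g s) : ℝ≥0∞) : EReal) -
        ((∫⁻ s in Ico 0 r, ENNReal.ofReal (-g s) : ℝ≥0∞) : EReal) := by
  rw [intervalIntegral.integral_of_le hr, ← integral_Ico_eq_integral_Ioc,
    integral_eq_lintegral_pos_part_sub_lintegral_neg_part hg, EReal.coe_sub,
    EReal.coe_ennreal_toReal hg.lintegral_lt_top.ne,
    EReal.coe_ennreal_toReal (x := ∫⁻ s in Ico 0 r, ENNReal.ofReal (-g s))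
      hg.neg.lintegral_lt_top.ne]

theorem lintegral_Ico_convexComb_le {g : ℝ → ℝ} (hg : MonotoneOn g (Ici 0)) {a b u : ℝ}
    (ha : 0 ≤ a) (hb : 0 ≤ b) (hu₀ : 0 ≤ u) (hu₁ : u ≤ 1) :
    (∫⁻ s in Ico 0 ((1 - u) * a + u * b), ENNReal.ofReal (g s)) +
        (ENNReal.ofReal (1 - u) * (∫⁻ s in Ico 0 a, ENNReal.ofReal (-g s)) +
          ENNReal.ofReal u * ∫⁻ s in Ico 0 b, ENNReal.ofReal (-g s)) ≤
      (ENNReal.ofReal (1 - u) * (∫⁻ s in Ico 0 a, ENNReal.ofReal (g s)) +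
          ENNReal.ofReal u * ∫⁻ s in Ico 0 b, ENNReal.ofReal (g s)) +
        ∫⁻ s in Ico 0 ((1 - u) * a + u * b), ENNReal.ofReal (-g s) := by
  have hint := hg.integrableOn_Ico
  have hfin : ∀ r, (∫⁻ s in Ico 0 r, ENNReal.ofReal (-g s)) ≠ ⊤ :=
    fun r => (hint r).neg.lintegral_lt_top.ne
  rw [← EReal.coe_ennreal_sub_le_coe_ennreal_sub_iff (hfin _)
      (ENNReal.add_ne_top.2 ⟨ENNReal.mul_ne_top ENNReal.ofReal_ne_top (hfin a),
        ENNReal.mul_ne_top ENNReal.ofReal_ne_top (hfin b)⟩),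
    ← EReal.coe_mul_sub_add_coe_mul_sub (sub_nonneg.2 hu₁) hu₀,
    ← coe_intervalIntegral_eq_lintegral_sub ha (hint a),
    ← coe_intervalIntegral_eq_lintegral_sub hb (hint b),
    ← coe_intervalIntegral_eq_lintegral_sub (by positivity) (hint _)]
  exact_mod_cast hg.convexOn_intervalIntegral.2 ha hb (sub_nonneg.2 hu₁) hu₀ (by ring)

noncomputable def posPrimitive (g : ℝ → ℝ) (t : ℝ≥0∞) : ℝ≥0∞ :=
  ∫⁻ s in {s : ℝ | 0 ≤ s ∧ ENNReal.ofReal s < t}, ENNReal.ofReal (g s)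

theorem clearingObjective_eq {X : Type*} [MeasurableSpace X] (ν : Measure X) (ξ : X → ℝ → ℝ)
    (τ : X → ℝ≥0∞) :
    clearingObjective ν ξ τ = ((∫⁻ x, posPrimitive (ξ x) (τ x) ∂ν : ℝ≥0∞) : EReal) -
      ((∫⁻ x, posPrimitive (-ξ x) (τ x) ∂ν : ℝ≥0∞) : EReal) :=
  rfl

theorem measurableSet_setOf_nonneg_ofReal_lt (t : ℝ≥0∞) :
    MeasurableSet {s : ℝ | 0 ≤ s ∧ ENNReal.ofReal s < t} :=
  measurableSet_Ici.inter (measurableSet_Iio.preimage ENNReal.measurable_ofReal)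

theorem setOf_nonneg_ofReal_lt_eq_Ico {t : ℝ≥0∞} (ht : t ≠ ⊤) :
    {s : ℝ | 0 ≤ s ∧ ENNReal.ofReal s < t} = Ico 0 t.toReal := by
  ext s
  exact and_congr_right fun hs => ENNReal.ofReal_lt_iff_lt_toReal hs ht

theorem posPrimitive_of_ne_top (g : ℝ → ℝ) {t : ℝ≥0∞} (ht : t ≠ ⊤) :
    posPrimitive g t = ∫⁻ s in Ico 0 t.toReal, ENNReal.ofReal (g s) := by
  rw [posPrimitive, setOf_nonneg_ofReal_lt_eq_Ico ht]

theorem posPrimitive_convexComb_le {g : ℝ → ℝ} (hg : MonotoneOn g (Ici 0)) {a b : ℝ≥0∞}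
    (ha : a ≠ ⊤) (hb : b ≠ ⊤) {u : ℝ} (hu₀ : 0 ≤ u) (hu₁ : u ≤ 1) :
    posPrimitive g (ENNReal.ofReal (1 - u) * a + ENNReal.ofReal u * b) +
        (ENNReal.ofReal (1 - u) * posPrimitive (-g) a + ENNReal.ofReal u * posPrimitive (-g) b) ≤
      (ENNReal.ofReal (1 - u) * posPrimitive g a + ENNReal.ofReal u * posPrimitive g b) +
        posPrimitive (-g) (ENNReal.ofReal (1 - u) * a + ENNReal.ofReal u * b) := by
  have hc : ENNReal.ofReal (1 - u) * a + ENNReal.ofReal u * b =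
      ENNReal.ofReal ((1 - u) * a.toReal + u * b.toReal) := by
    rw [ENNReal.ofReal_add (by positivity) (by positivity), ENNReal.ofReal_mul (by linarith),
      ENNReal.ofReal_mul hu₀, ENNReal.ofReal_toReal ha, ENNReal.ofReal_toReal hb]
  simp only [posPrimitive_of_ne_top _ ha, posPrimitive_of_ne_top _ hb, hc,
    posPrimitive_of_ne_top _ ENNReal.ofReal_ne_top, ENNReal.toReal_ofReal (by positivity :
      0 ≤ (1 - u) * a.toReal + u * b.toReal)]
  exact lintegral_Ico_convexComb_le hg ENNReal.toReal_nonneg ENNReal.toReal_nonneg hu₀ hu₁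

section Objective

variable {X : Type*} [MeasurableSpace X]

theorem measurable_posPrimitive {ξ : X → ℝ → ℝ} (hmeas : ∀ t, Measurable (ξ · t))
    (hrc : ∀ x, ∀ t ∈ Ici (0 : ℝ), ContinuousWithinAt (ξ x) (Ici t) t)
    {τ : X → ℝ≥0∞} (hτ : Measurable τ) : Measurable fun x => posPrimitive (ξ x) (τ x) := by
  -- `hrc` only holds on `[0, ∞)`; clamping at `0` makes `ξ x` right continuous on all of `ℝ`
  have hG : Measurable (Function.uncurry fun x s => ξ x (max s 0)) :=
    measurable_uncurry_of_continuousWithinAt_Ici (fun _ => hmeas _) fun x t =>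
      (hrc x _ (le_max_right t 0)).comp (f := fun s => max s 0)
        (continuous_id.max continuous_const).continuousWithinAt
        fun _ hs => max_le_max_right 0 (mem_Ici.1 hs)
  set S := {p : X × ℝ | 0 ≤ p.2 ∧ ENNReal.ofReal p.2 < τ p.1}
  have hS : MeasurableSet S := (measurableSet_le measurable_const measurable_snd).inter
    (measurableSet_lt (ENNReal.measurable_ofReal.comp measurable_snd) (hτ.comp measurable_fst))
  have h_eq : ∀ x, posPrimitive (ξ x) (τ x) =
      ∫⁻ s, S.indicator (fun p => ENNReal.ofReal (ξ p.1 (max p.2 0))) (x, s) := fun x => by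
    rw [posPrimitive, ← lintegral_indicator (measurableSet_setOf_nonneg_ofReal_lt _)]
    refine lintegral_congr fun s => ?_
    by_cases hs : 0 ≤ s ∧ ENNReal.ofReal s < τ x
    · simp [indicator_of_mem, hs, S]
    · simp [indicator_of_notMem, hs, S]
  simp_rw [h_eq]
  exact (hG.ennreal_ofReal.indicator hS).lintegral_prod_right'

theorem lintegral_posPrimitive_ne_top {ν : Measure X} {g : X → ℝ → ℝ} {T τ : X → ℝ≥0∞}
    (hT : ∫⁻ x, (∫⁻ s in {s : ℝ | 0 ≤ s ∧ ENNReal.ofReal s ≤ T x},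
      ENNReal.ofReal (g x s)) ∂ν < ⊤)
    (hτ : ∀ᵐ x ∂ν, τ x ≤ T x) : ∫⁻ x, posPrimitive (g x) (τ x) ∂ν ≠ ⊤ :=
  ne_top_of_le_ne_top hT.ne <| lintegral_mono_ae <| hτ.mono fun _ hx =>
    lintegral_mono_set fun _ hs => ⟨hs.1, hs.2.le.trans hx⟩

theorem clearingObjective_convexComb_le {ν : Measure X} {ξ : X → ℝ → ℝ}
    (hmeas : ∀ t, Measurable (ξ · t)) (hmono : ∀ x, MonotoneOn (ξ x) (Ici 0))
    (hrc : ∀ x, ∀ t ∈ Ici (0 : ℝ), ContinuousWithinAt (ξ x) (Ici t) t)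
    {τa τb : X → ℝ≥0∞} (hτa : Measurable τa) (hτb : Measurable τb)
    (ha : ∀ᵐ x ∂ν, τa x ≠ ⊤) (hb : ∀ᵐ x ∂ν, τb x ≠ ⊤) {u : ℝ} (hu₀ : 0 ≤ u) (hu₁ : u ≤ 1)
    (hNa : ∫⁻ x, posPrimitive (-ξ x) (τa x) ∂ν ≠ ⊤)
    (hNb : ∫⁻ x, posPrimitive (-ξ x) (τb x) ∂ν ≠ ⊤)
    (hNc : ∫⁻ x, posPrimitive (-ξ x)
      (ENNReal.ofReal (1 - u) * τa x + ENNReal.ofReal u * τb x) ∂ν ≠ ⊤) :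
    clearingObjective ν ξ (fun x => ENNReal.ofReal (1 - u) * τa x + ENNReal.ofReal u * τb x) ≤
      ((1 - u : ℝ) : EReal) * clearingObjective ν ξ τa +
        (u : EReal) * clearingObjective ν ξ τb := by
  have hP {τ} (hτ : Measurable τ) := measurable_posPrimitive hmeas hrc hτ
  have hN {τ} (hτ : Measurable τ) := measurable_posPrimitive (ξ := fun x => -ξ x)
    (fun t => (hmeas t).neg) (fun x t ht => (hrc x t ht).neg) hτ
  have hc : Measurable fun x => ENNReal.ofReal (1 - u) * τa x + ENNReal.ofReal u * τb x := by
    fun_prop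
  rw [clearingObjective_eq, clearingObjective_eq, clearingObjective_eq,
    EReal.coe_mul_sub_add_coe_mul_sub (sub_nonneg.2 hu₁) hu₀,
    EReal.coe_ennreal_sub_le_coe_ennreal_sub_iff hNc (by finiteness),
    ← lintegral_const_mul _ (hN hτa), ← lintegral_const_mul _ (hN hτb),
    ← lintegral_const_mul _ (hP hτa), ← lintegral_const_mul _ (hP hτb),
    ← lintegral_add_left ((hN hτa).const_mul _), ← lintegral_add_left ((hP hτa).const_mul _),
    ← lintegral_add_left (hP hc), ← lintegral_add_right _ (hN hc)]
  exact lintegral_mono_ae <| (ha.and hb).mono fun x hx =>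
    posPrimitive_convexComb_le (hmono x) hx.1 hx.2 hu₀ hu₁

end Objective

theorem stmt8_general {X : Type*} [MeasurableSpace X] (μ ν : Measure X)
    (Y : X → ℝ)
    (hν : ν = μ.withDensity fun x => ENNReal.ofReal (Y x))
    (ξ : X → ℝ → ℝ)
    (hmeas : ∀ t : ℝ, Measurable fun x => ξ x t)
    (hmono : ∀ x, MonotoneOn (ξ x) (Set.Ici (0 : ℝ)))
    (hrc : ∀ x, ∀ t ∈ Set.Ici (0 : ℝ), ContinuousWithinAt (ξ x) (Set.Ici t) t)
    (T : X → ℝ≥0∞)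
    (hint : (∫⁻ x, (∫⁻ s in {s : ℝ | 0 ≤ s ∧ ENNReal.ofReal s ≤ T x},
        ENNReal.ofReal (-(ξ x s))) ∂ν) < ⊤)
    -- `τopt a` is the optimal solution of the problem with constraint `μτ = a`:
    (τopt : ℝ → X → ℝ≥0∞)
    (hfeas : ∀ a : ℝ, 0 ≤ a → ENNReal.ofReal a ≤ (∫⁻ x, T x ∂μ) →
      Measurable (τopt a) ∧ (∀ᵐ x ∂μ, τopt a x ≤ T x) ∧
      (∫⁻ x, τopt a x ∂μ) = ENNReal.ofReal a)
    (hopt : ∀ a : ℝ, 0 ≤ a → ENNReal.ofReal a ≤ (∫⁻ x, T x ∂μ) →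
      ∀ τ : X → ℝ≥0∞, Measurable τ → (∀ᵐ x ∂μ, τ x ≤ T x) →
        (∫⁻ x, τ x ∂μ) = ENNReal.ofReal a →
        clearingObjective ν ξ (τopt a) ≤ clearingObjective ν ξ τ) :
    -- convexity of `f(a) = ν ∫_0^{τopt a} ξ ds` on `[0, μT] ∩ [0, ∞)`:
    ∀ a b : ℝ, 0 ≤ a → ENNReal.ofReal a ≤ (∫⁻ x, T x ∂μ) →
      0 ≤ b → ENNReal.ofReal b ≤ (∫⁻ x, T x ∂μ) →
      ∀ u : ℝ, u ∈ Set.Icc (0 : ℝ) 1 →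
        clearingObjective ν ξ (τopt ((1 - u) * a + u * b)) ≤
          ((1 - u : ℝ) : EReal) * clearingObjective ν ξ (τopt a) +
            ((u : ℝ) : EReal) * clearingObjective ν ξ (τopt b) := by
  intro a b ha haT hb hbT u ⟨hu₀, hu₁⟩
  obtain ⟨hτa, hτaT, hμa⟩ := hfeas a ha haT
  obtain ⟨hτb, hτbT, hμb⟩ := hfeas b hb hbT
  set τ := fun x => ENNReal.ofReal (1 - u) * τopt a x + ENNReal.ofReal u * τopt b x
  have hνμ : ν ≪ μ := hν ▸ withDensity_absolutelyContinuous μ _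
  have hτT : ∀ᵐ x ∂μ, τ x ≤ T x := by
    filter_upwards [hτaT, hτbT] with x hxa hxb
    calc τ x ≤ ENNReal.ofReal (1 - u) * T x + ENNReal.ofReal u * T x :=
          add_le_add (mul_le_mul_right hxa _) (mul_le_mul_right hxb _)
      _ = T x := by rw [← add_mul, ← ENNReal.ofReal_add (by linarith) hu₀]; simp
  have hμτ : ∫⁻ x, τ x ∂μ = ENNReal.ofReal ((1 - u) * a + u * b) := by
    rw [lintegral_add_left (hτa.const_mul _), lintegral_const_mul _ hτa,
      lintegral_const_mul _ hτb, hμa, hμb, ← ENNReal.ofReal_mul (by linarith),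
      ← ENNReal.ofReal_mul hu₀, ← ENNReal.ofReal_add (by positivity) (by positivity)]
  have hae_fin {c} (hτc : Measurable (τopt c)) (hμc : ∫⁻ x, τopt c x ∂μ = ENNReal.ofReal c) :
      ∀ᵐ x ∂ν, τopt c x ≠ ⊤ :=
    hνμ.ae_le <| (ae_lt_top hτc (by simp [hμc])).mono fun _ hx => hx.ne
  calc clearingObjective ν ξ (τopt ((1 - u) * a + u * b)) ≤ clearingObjective ν ξ τ :=
        hopt _ (by positivity) (hμτ ▸ lintegral_mono_ae hτT) τ (by fun_prop) hτT hμτ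
    _ ≤ _ := clearingObjective_convexComb_le hmeas hmono hrc hτa hτb (hae_fin hτa hμa)
        (hae_fin hτb hμb) hu₀ hu₁ (lintegral_posPrimitive_ne_top hint (hνμ.ae_le hτaT))
        (lintegral_posPrimitive_ne_top hint (hνμ.ae_le hτbT))
        (lintegral_posPrimitive_ne_top hint (hνμ.ae_le hτT))

/-- Proposition 1 (convexity part): when `μτ_λ < ∞` for all `λ`, the value
function `f(α) = ν ∫_0^{τ(α)} ξ(s) ds` of the constrained problem is convex on
`[0, μT] ∩ [0, ∞)`. -/
theorem stmt8 {X : Type*} [MeasurableSpace X] (μ ν : Measure X) [SigmaFinite μ]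
    [SigmaFinite ν]
    (Y : X → ℝ) (hYmeas : Measurable Y) (hYnn : ∀ x, 0 ≤ Y x)
    (hν : ν = μ.withDensity fun x => ENNReal.ofReal (Y x))
    (ξ : X → ℝ → ℝ)
    (hmeas : ∀ t : ℝ, Measurable fun x => ξ x t)
    (hmono : ∀ x, MonotoneOn (ξ x) (Set.Ici (0 : ℝ)))
    (hrc : ∀ x, ∀ t ∈ Set.Ici (0 : ℝ), ContinuousWithinAt (ξ x) (Set.Ici t) t)
    (T : X → ℝ≥0∞) (hT : Measurable T)
    (hint : (∫⁻ x, (∫⁻ s in {s : ℝ | 0 ≤ s ∧ ENNReal.ofReal s ≤ T x},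
        ENNReal.ofReal (-(ξ x s))) ∂ν) < ⊤)
    -- `μτ_λ < ∞` for every `λ ∈ ℝ`:
    (hfin : ∀ lam : ℝ, (∫⁻ x,
        min (sInf (ENNReal.ofReal '' {t : ℝ | 0 ≤ t ∧ lam ≤ Y x * ξ x t})) (T x) ∂μ) < ⊤)
    -- `τopt a` is the optimal solution of the problem with constraint `μτ = a`:
    (τopt : ℝ → X → ℝ≥0∞)
    (hfeas : ∀ a : ℝ, 0 ≤ a → ENNReal.ofReal a ≤ (∫⁻ x, T x ∂μ) →
      Measurable (τopt a) ∧ (∀ᵐ x ∂μ, τopt a x ≤ T x) ∧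
      (∫⁻ x, τopt a x ∂μ) = ENNReal.ofReal a)
    (hopt : ∀ a : ℝ, 0 ≤ a → ENNReal.ofReal a ≤ (∫⁻ x, T x ∂μ) →
      ∀ τ : X → ℝ≥0∞, Measurable τ → (∀ᵐ x ∂μ, τ x ≤ T x) →
        (∫⁻ x, τ x ∂μ) = ENNReal.ofReal a →
        clearingObjective ν ξ (τopt a) ≤ clearingObjective ν ξ τ) :
    -- convexity of `f(a) = ν ∫_0^{τopt a} ξ ds` on `[0, μT] ∩ [0, ∞)`:
    ∀ a b : ℝ, 0 ≤ a → ENNReal.ofReal a ≤ (∫⁻ x, T x ∂μ) →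
      0 ≤ b → ENNReal.ofReal b ≤ (∫⁻ x, T x ∂μ) →
      ∀ u : ℝ, u ∈ Set.Icc (0 : ℝ) 1 →
        clearingObjective ν ξ (τopt ((1 - u) * a + u * b)) ≤
          ((1 - u : ℝ) : EReal) * clearingObjective ν ξ (τopt a) +
            ((u : ℝ) : EReal) * clearingObjective ν ξ (τopt b) :=
  stmt8_general μ ν Y hν ξ hmeas hmono hrc T hint τopt hfeas hopt
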